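/- For every x ∈ ℝ one has Q₁(x) := ψ'(x)·ψ'''(x) − (ψ''(x))² > 0. -/

import Mathlib

/-!
With `a = ρ/k`, `b = √(2k)/σ` and `M p c = ∫₀^∞ t^p e^{-t²/2 + ct} dt`, one has
`ψ x = Γ(a)⁻¹ M (a-1) ((x-μ)b)` and `∂_c M p = M (p+1)`, so `ψ⁽ⁿ⁾ x = Γ(a)⁻¹ bⁿ M (a-1+n) ((x-μ)b)`.
Hence `Q₁ = Γ(a)⁻² b⁴ (M a · M (a+2) - M (a+1)²)`, and the bracket is positive by the strict
Cauchy–Schwarz inequality for the positive weight `t^a e^{-t²/2+ct}` on `(0, ∞)`: it is `M a` times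
the variance `∫ (t - M (a+1) / M a)² t^a e^{-t²/2+ct} dt` of that weight.
-/

noncomputable section

open MeasureTheory

/-- The increasing fundamental solution of the Ornstein–Uhlenbeck resolvent equation. -/
def psi (ρ k σ μ : ℝ) (x : ℝ) : ℝ :=
  (1 / Real.Gamma (ρ / k)) *
    ∫ t in Set.Ioi (0 : ℝ),
      t ^ (ρ / k - 1) * Real.exp (-t ^ 2 / 2 + ((x - μ) * Real.sqrt (2 * k) / σ) * t)

open Set Real

theorem setIntegral_pos_of_pos_off_null {α : Type*} [MeasurableSpace α] {μ : Measure α}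
    {s N : Set α} {f : α → ℝ} (hs : MeasurableSet s) (hμs : μ s ≠ 0) (hN : μ N = 0)
    (hf_nonneg : ∀ t ∈ s, 0 ≤ f t) (hf_pos : ∀ t ∈ s \ N, 0 < f t) (hf : IntegrableOn f s μ) :
    0 < ∫ t in s, f t ∂μ := by
  refine (setIntegral_pos_iff_support_of_nonneg_ae ?_ hf).2 ?_
  · filter_upwards [ae_restrict_mem hs] with t ht using hf_nonneg t ht
  · calc 0 < μ (s \ N) := by rwa [measure_sdiff_null hN, pos_iff_ne_zero]
      _ ≤ μ (Function.support f ∩ s) :=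
        measure_mono fun t ht => ⟨(hf_pos t ht).ne', ht.1⟩

theorem sq_setIntegral_mul_lt {s : Set ℝ} {g : ℝ → ℝ} (hs : MeasurableSet s)
    (hs0 : volume s ≠ 0) (hg : ∀ t ∈ s, 0 < g t) (hg₀ : IntegrableOn g s)
    (hg₁ : IntegrableOn (fun t => t * g t) s) (hg₂ : IntegrableOn (fun t => t ^ 2 * g t) s) :
    (∫ t in s, t * g t) ^ 2 < (∫ t in s, g t) * ∫ t in s, t ^ 2 * g t := by
  set A := ∫ t in s, g t
  set B := ∫ t in s, t * g t
  set D := ∫ t in s, t ^ 2 * g t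
  have hA : 0 < A := setIntegral_pos_of_pos_off_null hs hs0 measure_empty
    (fun t ht => (hg t ht).le) (fun t ht => hg t ht.1) hg₀
  set l := B / A
  have hexpand : (fun t => (t - l) ^ 2 * g t)
      = fun t => t ^ 2 * g t - 2 * l * (t * g t) + l ^ 2 * g t := by
    funext t; ring
  have hvar : ∫ t in s, (t - l) ^ 2 * g t = D - 2 * l * B + l ^ 2 * A := by
    have hfirst : IntegrableOn (fun t => t ^ 2 * g t - 2 * l * (t * g t)) s :=
      hg₂.sub (hg₁.const_mul _)
    rw [hexpand, integral_add hfirst (hg₀.const_mul _), integral_sub hg₂ (hg₁.const_mul _),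
      integral_const_mul, integral_const_mul]
  have hint : IntegrableOn (fun t => (t - l) ^ 2 * g t) s := by
    rw [hexpand]; exact (hg₂.sub (hg₁.const_mul _)).add (hg₀.const_mul _)
  have hvar_pos : 0 < ∫ t in s, (t - l) ^ 2 * g t :=
    setIntegral_pos_of_pos_off_null hs hs0 (measure_singleton l)
      (fun t ht => mul_nonneg (sq_nonneg _) (hg t ht).le)
      (fun t ⟨ht, htl⟩ => mul_pos (sq_pos_of_ne_zero (sub_ne_zero.2 htl)) (hg t ht)) hint
  have : A * D - B ^ 2 = A * ∫ t in s, (t - l) ^ 2 * g t := by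
    rw [hvar, show l = B / A from rfl]; field_simp; ring
  linarith [mul_pos hA hvar_pos]

def tiltedGaussianMoment (p c : ℝ) : ℝ :=
  ∫ t in Ioi 0, t ^ p * exp (-t ^ 2 / 2 + c * t)

theorem integrableOn_rpow_mul_exp_neg_sq_add_mul {p : ℝ} (hp : -1 < p) (c : ℝ) :
    IntegrableOn (fun t => t ^ p * exp (-t ^ 2 / 2 + c * t)) (Ioi 0) := by
  refine ((integrableOn_rpow_mul_exp_neg_mul_sq (by norm_num : (0 : ℝ) < 1 / 4) hp).const_mul
    (exp (c ^ 2))).mono' (by fun_prop) ?_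
  filter_upwards [ae_restrict_mem measurableSet_Ioi] with t (ht : 0 < t)
  rw [norm_of_nonneg (by positivity), mul_left_comm, ← exp_add]
  gcongr t ^ p * exp ?_
  nlinarith [sq_nonneg (t / 2 - c)]

theorem hasDerivAt_tiltedGaussianMoment {p : ℝ} (hp : -1 < p) (c : ℝ) :
    HasDerivAt (tiltedGaussianMoment p) (tiltedGaussianMoment (p + 1) c) c := by
  have hp' : -1 < p + 1 := by linarith
  refine (hasDerivAt_integral_of_dominated_loc_of_deriv_le (μ := volume.restrict (Ioi 0))
    (F := fun c t => t ^ p * exp (-t ^ 2 / 2 + c * t))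
    (F' := fun c t => t ^ (p + 1) * exp (-t ^ 2 / 2 + c * t))
    (bound := fun t => t ^ (p + 1) * exp (-t ^ 2 / 2 + (|c| + 1) * t))
    (Metric.ball_mem_nhds c one_pos) (.of_forall fun _ => by fun_prop)
    (integrableOn_rpow_mul_exp_neg_sq_add_mul hp c) (by fun_prop) ?_
    (integrableOn_rpow_mul_exp_neg_sq_add_mul hp' _) ?_).2
  · filter_upwards [ae_restrict_mem measurableSet_Ioi] with t (ht : 0 < t) c' hc'
    have hc' : c' ≤ |c| + 1 := by
      have := (abs_sub_lt_iff.1 (Metric.mem_ball.1 hc')).1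
      linarith [le_abs_self c]
    rw [norm_of_nonneg (by positivity)]
    gcongr
  · filter_upwards [ae_restrict_mem measurableSet_Ioi] with t (ht : 0 < t) c' _
    rw [rpow_add_one ht.ne', mul_right_comm]
    exact (((hasDerivAt_mul_const t).const_add _).exp.const_mul _).congr_deriv
      (by ring)

theorem sq_tiltedGaussianMoment_lt {p : ℝ} (hp : -1 < p) (c : ℝ) :
    tiltedGaussianMoment (p + 1) c ^ 2
      < tiltedGaussianMoment p c * tiltedGaussianMoment (p + 1 + 1) c := by
  have hshift : ∀ q : ℝ, EqOn (fun t => t ^ (q + 1) * exp (-t ^ 2 / 2 + c * t))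
      (fun t => t * (t ^ q * exp (-t ^ 2 / 2 + c * t))) (Ioi 0) := fun q t (ht : 0 < t) => by
    simp only [rpow_add_one ht.ne']; ring
  have hsq : EqOn (fun t => t ^ (p + 1 + 1) * exp (-t ^ 2 / 2 + c * t))
      (fun t => t ^ 2 * (t ^ p * exp (-t ^ 2 / 2 + c * t))) (Ioi 0) := fun t (ht : 0 < t) => by
    simp only [rpow_add_one ht.ne']; ring
  have hint := fun q (hq : -1 < q) => integrableOn_rpow_mul_exp_neg_sq_add_mul hq c
  unfold tiltedGaussianMoment
  rw [setIntegral_congr_fun measurableSet_Ioi (hshift p),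
    setIntegral_congr_fun measurableSet_Ioi hsq]
  exact sq_setIntegral_mul_lt measurableSet_Ioi (by simp) (fun t (ht : 0 < t) => by positivity)
    (hint p hp) ((hint _ (by linarith)).congr_fun (hshift p) measurableSet_Ioi)
    ((hint _ (by linarith)).congr_fun hsq measurableSet_Ioi)

theorem deriv_const_mul_tiltedGaussianMoment_comp {p : ℝ} (hp : -1 < p) (C b μ : ℝ) :
    deriv (fun x => C * tiltedGaussianMoment p ((x - μ) * b))
      = fun x => C * b * tiltedGaussianMoment (p + 1) ((x - μ) * b) := by
  funext x
  have hinner : HasDerivAt (fun x => (x - μ) * b) b x := by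
    simpa using ((hasDerivAt_id x).sub_const μ).mul_const b
  exact ((((hasDerivAt_tiltedGaussianMoment hp _).comp x hinner).const_mul C).deriv).trans
    (by ring)

theorem psi_eq_tiltedGaussianMoment (ρ k σ μ : ℝ) :
    psi ρ k σ μ = fun x =>
      1 / Gamma (ρ / k) * tiltedGaussianMoment (ρ / k - 1) ((x - μ) * (√(2 * k) / σ)) := by
  funext x
  simp only [psi, tiltedGaussianMoment, mul_div_assoc]

/-- For every `x ∈ ℝ`, `Q₁(x) := ψ'(x)ψ'''(x) − (ψ''(x))² > 0`. -/
theorem stmt11 (ρ k σ μ : ℝ) (hρ : 0 < ρ) (hk : 0 < k) (hσ : 0 < σ) (x : ℝ) :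
    0 < deriv (psi ρ k σ μ) x * deriv (deriv (deriv (psi ρ k σ μ))) x
      - (deriv (deriv (psi ρ k σ μ)) x) ^ 2 := by
  set a := ρ / k
  set b := √(2 * k) / σ
  have ha : 0 < a := div_pos hρ hk
  have hb : 0 < b := div_pos (sqrt_pos.2 (by positivity)) hσ
  have hC : 0 < 1 / Gamma a := one_div_pos.2 (Gamma_pos_of_pos ha)
  have hp : -1 < a - 1 := by linarith
  rw [psi_eq_tiltedGaussianMoment, deriv_const_mul_tiltedGaussianMoment_comp hp,
    deriv_const_mul_tiltedGaussianMoment_comp (by linarith),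
    deriv_const_mul_tiltedGaussianMoment_comp (by linarith)]
  have hCS := sq_tiltedGaussianMoment_lt (p := a - 1 + 1) (by linarith) ((x - μ) * b)
  set M := fun q => tiltedGaussianMoment q ((x - μ) * b)
  calc 0 < (1 / Gamma a * b * b) ^ 2
        * (M (a - 1 + 1) * M (a - 1 + 1 + 1 + 1) - M (a - 1 + 1 + 1) ^ 2) :=
        mul_pos (by positivity) (sub_pos.2 hCS)
    _ = _ := by ring
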